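/- Let ζ > 0, a > 0, λ > 0 and pen(ω) = (λ/ln 2)·ln((2(ω/a) + ζ)/((ω/a) + ζ)) on [0, ∞). If a ≥ ζ/(ln 2 · (ζ² + 3ζ + 2)), then for all ω ≥ a, the derivative pen′(ω) satisfies 0 ≤ pen′(ω) ≤ λ. In particular the bias imposed by the SELO penalty for |ω| ≥ a is no larger than that of the Lasso slope λ. -/
import Mathlib


noncomputable def seloPenPos (ζ a lam ω : ℝ) : ℝ :=
  lam / Real.log 2 * Real.log ((2 * (ω / a) + ζ) / (ω / a + ζ))

theorem stmt_4 (ζ a lam : ℝ) (hζ : 0 < ζ) (ha : 0 < a) (hlam : 0 < lam)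
    (haBig : ζ / (Real.log 2 * (ζ ^ 2 + 3 * ζ + 2)) ≤ a) :
    ∀ ω : ℝ, a ≤ ω →
      ∃ d : ℝ, HasDerivAt (seloPenPos ζ a lam) d ω ∧ 0 ≤ d ∧ d ≤ lam := by
  intro ω hω
  have hlog2 : (0:ℝ) < Real.log 2 := Real.log_pos (by norm_num)
  have hu : (1:ℝ) ≤ ω / a := (one_le_div ha).mpr hω
  set u := ω / a with hu_def
  have hD : (0:ℝ) < u + ζ := by linarith
  have hN : (0:ℝ) < 2 * u + ζ := by linarith
  have hg : (0:ℝ) < (2 * u + ζ) / (u + ζ) := div_pos hN hD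
  -- derivative computations
  have h1 : HasDerivAt (fun ω : ℝ => ω / a) (1 / a) ω := by
    simpa using (hasDerivAt_id ω).div_const a
  have hNd : HasDerivAt (fun ω : ℝ => 2 * (ω / a) + ζ) (2 * (1 / a)) ω :=
    (h1.const_mul 2).add_const ζ
  have hDd : HasDerivAt (fun ω : ℝ => ω / a + ζ) (1 / a) ω := h1.add_const ζ
  have hgd : HasDerivAt (fun ω : ℝ => (2 * (ω / a) + ζ) / (ω / a + ζ))
      ((2 * (1 / a) * (u + ζ) - (2 * u + ζ) * (1 / a)) / (u + ζ) ^ 2) ω :=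
    hNd.div hDd hD.ne'
  have hlogd : HasDerivAt (fun ω : ℝ => Real.log ((2 * (ω / a) + ζ) / (ω / a + ζ)))
      ((2 * (1 / a) * (u + ζ) - (2 * u + ζ) * (1 / a)) / (u + ζ) ^ 2 /
        ((2 * u + ζ) / (u + ζ))) ω := hgd.log hg.ne'
  have hd : HasDerivAt (seloPenPos ζ a lam)
      (lam / Real.log 2 * ((2 * (1 / a) * (u + ζ) - (2 * u + ζ) * (1 / a)) / (u + ζ) ^ 2 /
        ((2 * u + ζ) / (u + ζ)))) ω := hlogd.const_mul _
  set d := lam / Real.log 2 * ((2 * (1 / a) * (u + ζ) - (2 * u + ζ) * (1 / a)) / (u + ζ) ^ 2 /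
        ((2 * u + ζ) / (u + ζ))) with hd_def
  refine ⟨d, hd, ?_, ?_⟩
  · have hnum : 2 * (1 / a) * (u + ζ) - (2 * u + ζ) * (1 / a) = ζ / a := by
      field_simp; ring
    rw [hd_def, hnum]
    positivity
  · have hdeq : d = lam * ζ / (Real.log 2 * a * ((u + ζ) * (2 * u + ζ))) := by
      rw [hd_def]
      field_simp
      ring
    rw [hdeq, div_le_iff₀ (by positivity)]
    have hzb : ζ ≤ a * (Real.log 2 * (ζ ^ 2 + 3 * ζ + 2)) := by
      exact (div_le_iff₀ (by positivity)).mp haBig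
    have hprod : (ζ ^ 2 + 3 * ζ + 2) ≤ (u + ζ) * (2 * u + ζ) := by nlinarith
    nlinarith [mul_pos hlam hlog2, mul_le_mul_of_nonneg_left hprod (le_of_lt (mul_pos hlog2 ha))]
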